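/- arXiv:1803.01760 — 4 statements merged into one kernel-verified Lean document; each statement's English description precedes it below -/
import Mathlib

section
/- For every k with 3 ≤ k ≤ n, the order of the product f_1 f_{k−2} f_{k−1} of pancake generators in the symmetric group S_n is k−1. -/
/-!
In `0`-indexed positions, `f_{k-2} f_{k-1}` is the inverse `c⁻¹` of the `k`-cycle
`(0 1 … k-1)` (`Fin.cycleRange`), and `f_1` is the transposition of `1` and `c⁻¹ 1 = 0`.
Multiplying a cycle `σ` on the left by the transposition of `x` and `σ x` splits off `x` as a
fixed point and leaves a cycle on the remaining points of the support, so `f_1 f_{k-2} f_{k-1}`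
is a `(k-1)`-cycle, whose order is its length.
-/

/-- The pancake generator `f_m` of the symmetric group `S_n` on `{1,…,n}`, modeled as
`Equiv.Perm (Fin n)` (positions `0`-indexed): it reverses the first `m+1` entries, i.e.
it sends the position `a` to `m - a` whenever `a ≤ m` (and `m < n`), and fixes all other
positions.  (In `1`-indexed terms, `f_m a = m + 2 - a` for `1 ≤ a ≤ m+1` and `f_m a = a`
for `m + 1 < a ≤ n`.) -/
def pancake (n m : ℕ) : Equiv.Perm (Fin n) :=
  Function.Involutive.toPerm
    (fun a => if h : (a : ℕ) ≤ m ∧ m < n then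
        ⟨m - (a : ℕ), Nat.lt_of_le_of_lt (Nat.sub_le m a) h.2⟩ else a)
    (by
      intro a
      dsimp only
      by_cases h : (a : ℕ) ≤ m ∧ m < n
      · rw [dif_pos h, dif_pos ⟨Nat.sub_le m (a : ℕ), h.2⟩]
        exact Fin.ext (Nat.sub_sub_self h.1)
      · rw [dif_neg h, dif_neg h])

open Equiv Equiv.Perm Finset

theorem Equiv.Perm.IsCycle.orderOf_swap_mul {α : Type*} [DecidableEq α] [Fintype α]
    {f : Perm α} (hf : IsCycle f) {x : α} (hx : f x ≠ x) (hffx : f (f x) ≠ x) :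
    orderOf (swap x (f x) * f) = #f.support - 1 := by
  rw [(hf.swap_mul hx hffx).orderOf, support_swap_mul_eq f x hffx,
    card_sdiff_of_subset (singleton_subset_iff.2 (mem_support.2 hx)), card_singleton]

theorem Fin.card_support_cycleRange {n : ℕ} [NeZero n] {i : Fin n} (h0 : i ≠ 0) :
    #(Fin.cycleRange i).support = i + 1 := by
  rw [← sum_cycleType, Fin.cycleType_cycleRange h0, Multiset.sum_singleton]

theorem pancake_val {n : ℕ} (m : ℕ) (hm : m < n) (a : Fin n) :
    (pancake n m a : ℕ) = if (a : ℕ) ≤ m then m - a else a := by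
  by_cases h : (a : ℕ) ≤ m
  · rw [if_pos h]; exact congrArg Fin.val (dif_pos ⟨h, hm⟩)
  · rw [if_neg h]; exact congrArg Fin.val (dif_neg fun hc => h hc.1)

theorem pancake_inv (n m : ℕ) : (pancake n m)⁻¹ = pancake n m :=
  Function.Involutive.toPerm_symm _

theorem pancake_one {n : ℕ} (h : 1 < n) : pancake n 1 = swap ⟨1, h⟩ ⟨0, by omega⟩ := by
  ext a
  rw [pancake_val 1 h, swap_apply_def]
  split_ifs <;> simp_all only [Fin.ext_iff] <;> omega

theorem pancake_succ_mul_pancake {n m : ℕ} (h : m + 1 < n) :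
    pancake n (m + 1) * pancake n m = Fin.cycleRange ⟨m + 1, h⟩ := by
  ext a
  rw [Perm.mul_apply, pancake_val (m + 1) h, pancake_val m (by omega)]
  rcases lt_trichotomy (a : ℕ) (m + 1) with ha | ha | ha
  · rw [Fin.coe_cycleRange_of_lt (Fin.lt_def.2 ha)]
    split_ifs <;> omega
  · rw [Fin.coe_cycleRange_of_le (Fin.le_def.2 ha.le), if_pos (Fin.ext ha)]
    split_ifs <;> omega
  · rw [Fin.cycleRange_of_gt (Fin.lt_def.2 ha)]
    split_ifs <;> omega

theorem pancake_mul_pancake_succ {n m : ℕ} (h : m + 1 < n) :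
    pancake n m * pancake n (m + 1) = (Fin.cycleRange ⟨m + 1, h⟩)⁻¹ := by
  rw [← pancake_succ_mul_pancake h, mul_inv_rev, pancake_inv, pancake_inv]

/-- For every `k` with `3 ≤ k ≤ n`, the order of `f_1 f_{k-2} f_{k-1}` in `S_n` is
`k - 1`. -/
theorem order_pancake_one_consecutive (n k : ℕ) (hk3 : 3 ≤ k) (hkn : k ≤ n) :
    orderOf (pancake n 1 * pancake n (k - 2) * pancake n (k - 1)) = k - 1 := by
  have : NeZero n := ⟨by omega⟩
  set i : Fin n := ⟨k - 1, by omega⟩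
  have hi : i ≠ 0 := Fin.ne_of_val_ne (by simp only [i, Fin.val_zero]; omega)
  set f := (Fin.cycleRange i)⁻¹
  have hf1 : f ⟨1, by omega⟩ = ⟨0, by omega⟩ := by
    rw [inv_eq_iff_eq]
    exact Fin.ext (Fin.coe_cycleRange_of_lt (Fin.mk_lt_mk.2 (by omega))).symm
  have hf0 : f ⟨0, by omega⟩ = i := by
    rw [inv_eq_iff_eq]
    exact (Fin.cycleRange_self i).symm
  have hg : pancake n 1 * pancake n (k - 2) * pancake n (k - 1)
      = swap ⟨1, by omega⟩ (f ⟨1, by omega⟩) * f := by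
    have hc : pancake n (k - 2) * pancake n (k - 1) = f := by
      obtain ⟨m, rfl⟩ : ∃ m, k = m + 2 := ⟨k - 2, by omega⟩
      exact pancake_mul_pancake_succ _
    rw [mul_assoc, hc, hf1, pancake_one]
  rw [hg, (Fin.isCycle_cycleRange hi).inv.orderOf_swap_mul, support_inv,
    Fin.card_support_cycleRange hi]
  · rfl
  · rw [hf1]; simp
  · rw [hf1, hf0]; exact Fin.ne_of_val_ne (by simp only [i]; omega)
end

section
/- Let 1 < j < k ≤ n with k ≥ 5, and set d = k−j, q = ⌊k/d⌋, r = k mod d. If r = 0 and d ≥ 4, then the order of f_1 f_{j−1} f_{k−1} in S_n equals 4q. -/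
open Function

theorem Equiv.Perm.pow_eq_one_iff_of_semiconj {α β : Type*} {g : Equiv.Perm α} {f : β → β}
    {φ : α → β} (hφ : Injective φ) (h : Semiconj φ g f) (t : ℕ) :
    g ^ t = 1 ↔ ∀ a, f^[t] (φ a) = φ a := by
  simp only [Equiv.Perm.ext_iff, Equiv.Perm.coe_pow, Equiv.Perm.one_apply,
    ← (h.iterate_right t).eq, hφ.eq_iff]

theorem val_pancake_apply (n m : ℕ) (a : Fin n) :
    (pancake n m a : ℕ) = if (a : ℕ) ≤ m ∧ m < n then m - a else a := by
  by_cases h : (a : ℕ) ≤ m ∧ m < n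
  · rw [if_pos h]
    exact congrArg Fin.val (dif_pos h)
  · rw [if_neg h]
    exact congrArg Fin.val (dif_neg h)

def tripleStep (d k a : ℕ) : ℕ :=
  if a < d then k - 1 - a
  else if a = d then 1
  else if a = d + 1 then 0
  else if a < k then a - d
  else a

theorem semiconj_val_pancake_triple {n j k : ℕ} (hj : 1 < j) (hjk : j < k) (hkn : k ≤ n) :
    Semiconj Fin.val (pancake n 1 * pancake n (j - 1) * pancake n (k - 1))
      (tripleStep (k - j) k) := by
  intro a
  simp only [Equiv.Perm.mul_apply, val_pancake_apply, tripleStep]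
  split_ifs <;> omega

def reflectResidue (d b : ℕ) : ℕ :=
  if b + 3 ≤ d then d - 1 - b else if b + 2 = d then 0 else 1

section reflectResidue

variable {d : ℕ}

theorem mapsTo_reflectResidue (hd : 2 ≤ d) :
    Set.MapsTo (reflectResidue d) (Set.Iio d) (Set.Iio d) := by
  intro b hb
  simp only [Set.mem_Iio, reflectResidue] at hb ⊢
  split_ifs <;> omega

theorem reflectResidue_of_add_three_le {b : ℕ} (h : b + 3 ≤ d) :
    reflectResidue d b = d - 1 - b :=
  if_pos h

theorem reflectResidue_sub_two (hd : 2 ≤ d) : reflectResidue d (d - 2) = 0 := by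
  simp only [reflectResidue]
  split_ifs <;> omega

theorem reflectResidue_sub_one (d : ℕ) : reflectResidue d (d - 1) = 1 := by
  simp only [reflectResidue]
  split_ifs <;> omega

theorem reflectResidue_iterate_four (hd : 4 ≤ d) {b : ℕ} (hb : b < d) :
    (reflectResidue d)^[4] b = b := by
  have h0 : reflectResidue d 0 = d - 1 := reflectResidue_of_add_three_le (by omega)
  have h1 : reflectResidue d 1 = d - 2 := reflectResidue_of_add_three_le (by omega)
  have hd2 : reflectResidue d (d - 2) = 0 := reflectResidue_sub_two (by omega)
  have hd1 : reflectResidue d (d - 1) = 1 := reflectResidue_sub_one d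
  simp only [iterate_succ_apply', iterate_zero_apply]
  rcases (by omega : b = 0 ∨ b = 1 ∨ b = d - 2 ∨ b = d - 1 ∨ (2 ≤ b ∧ b + 3 ≤ d)) with
    rfl | rfl | rfl | rfl | ⟨hb2, hb3⟩
  · rw [h0, hd1, h1, hd2]
  · rw [h1, hd2, h0, hd1]
  · rw [hd2, h0, hd1, h1]
  · rw [hd1, h1, hd2, h0]
  · have hinv : reflectResidue d (reflectResidue d b) = b := by
      rw [reflectResidue_of_add_three_le hb3, reflectResidue_of_add_three_le (by omega)]
      omega
    rw [hinv, hinv]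

end reflectResidue

section tripleStep

variable {d k : ℕ}

theorem tripleStep_of_lt {a : ℕ} (h : a < d) : tripleStep d k a = k - 1 - a := by
  simp [tripleStep, h]

theorem tripleStep_of_add_two_le {a : ℕ} (h : d + 2 ≤ a) (hk : a < k) :
    tripleStep d k a = a - d := by
  simp only [tripleStep]
  split_ifs <;> omega

theorem tripleStep_of_le {a : ℕ} (hk : d + 2 ≤ k) (h : k ≤ a) : tripleStep d k a = a := by
  simp only [tripleStep]
  split_ifs <;> omega

theorem iterate_tripleStep_add_mul {x : ℕ} (hx : 2 ≤ x) :
    ∀ i, x + i * d < k → (tripleStep d k)^[i] (x + i * d) = x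
  | 0, _ => by simp
  | i + 1, h => by
    have hstep : tripleStep d k (x + (i + 1) * d) = x + i * d := by
      rw [tripleStep_of_add_two_le (by nlinarith) h, add_one_mul]
      omega
    rw [iterate_succ_apply, hstep, iterate_tripleStep_add_mul hx i (by nlinarith)]

theorem iterate_tripleStep_succ_of_lt (hd : 2 ≤ d) {b m s : ℕ} (hb : b < d) (hm : 1 ≤ m)
    (hk : k = (m + s + 1) * d) : (tripleStep d k)^[s + 1] b = d - 1 - b + m * d := by
  have hk' : k = m * d + s * d + d := by rw [hk, add_mul, add_mul, one_mul]
  have hfirst : tripleStep d k b = d - 1 - b + m * d + s * d := by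
    rw [tripleStep_of_lt hb]
    omega
  rw [iterate_succ_apply, hfirst, iterate_tripleStep_add_mul (by nlinarith) s (by omega)]

variable {q : ℕ}

theorem iterate_tripleStep_q (hd : 2 ≤ d) (hq : 2 ≤ q) {b : ℕ} (hb : b < d) :
    (tripleStep d (q * d))^[q] b = reflectResidue d b := by
  obtain ⟨s, rfl⟩ : ∃ s, q = s + 2 := ⟨q - 2, by omega⟩
  rw [iterate_succ_apply', iterate_tripleStep_succ_of_lt hd hb le_rfl (by ring)]
  have h2d : 2 * d ≤ (s + 2) * d := Nat.mul_le_mul_right d (by omega)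
  simp only [tripleStep, reflectResidue, one_mul]
  split_ifs <;> omega

theorem iterate_tripleStep_q_mul (hd : 2 ≤ d) (hq : 2 ≤ q) {b : ℕ} (hb : b < d) (i : ℕ) :
    (tripleStep d (q * d))^[q * i] b = (reflectResidue d)^[i] b := by
  induction i generalizing b with
  | zero => simp
  | succ i ih =>
    rw [Nat.mul_succ, iterate_add_apply, iterate_tripleStep_q hd hq hb,
      ih (mapsTo_reflectResidue hd hb), iterate_succ_apply]

theorem isPeriodicPt_tripleStep (hd : 4 ≤ d) (hq : 2 ≤ q) (a : ℕ) :
    IsPeriodicPt (tripleStep d (q * d)) (4 * q) a := by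
  have hbelow : ∀ b < d, IsPeriodicPt (tripleStep d (q * d)) (4 * q) b := fun b hb => by
    rw [IsPeriodicPt, IsFixedPt, mul_comm 4 q, iterate_tripleStep_q_mul (by omega) hq hb,
      reflectResidue_iterate_four hd hb]
  rcases lt_or_ge a d with ha | ha
  · exact hbelow a ha
  rcases le_or_gt (q * d) a with hak | hak
  · exact IsFixedPt.isPeriodicPt (tripleStep_of_le (by nlinarith) hak) _
  have hc : a % d < d := Nat.mod_lt a (by omega)
  have hm : 1 ≤ a / d := (Nat.one_le_div_iff (by omega)).2 ha
  have hmq : a / d < q := (Nat.div_lt_iff_lt_mul (by omega)).2 hak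
  have h := (hbelow (d - 1 - a % d) (by omega)).apply_iterate (q - a / d - 1 + 1)
  rwa [iterate_tripleStep_succ_of_lt (by omega) (by omega) hm (by congr 1; omega),
    show d - 1 - (d - 1 - a % d) = a % d by omega, Nat.mod_add_div'] at h

theorem iterate_tripleStep_zero_ne_zero (hd : 4 ≤ d) (hq : 2 ≤ q) {t : ℕ} (ht0 : 0 < t)
    (ht : t < 4 * q) : (tripleStep d (q * d))^[t] 0 ≠ 0 := by
  obtain ⟨i, s, hsq, rfl⟩ : ∃ i s, s < q ∧ t = q * i + s :=
    ⟨t / q, t % q, Nat.mod_lt _ (by omega), (Nat.div_add_mod t q).symm⟩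
  have hi : i < 4 := by
    by_contra
    nlinarith
  rw [add_comm, iterate_add_apply, iterate_tripleStep_q_mul (by omega) hq (by omega)]
  rcases s with _ | s
  · have hi0 : i ≠ 0 := by
      rintro rfl
      simp at ht0
    have h0 : reflectResidue d 0 = d - 1 := reflectResidue_of_add_three_le (by omega)
    have h1 : reflectResidue d 1 = d - 2 := reflectResidue_of_add_three_le (by omega)
    interval_cases i <;>
      simp only [iterate_succ_apply', iterate_zero_apply, h0, reflectResidue_sub_one, h1] <;>
      omega
  · have hb : (reflectResidue d)^[i] 0 < d :=
      (mapsTo_reflectResidue (by omega)).iterate i (by simp only [Set.mem_Iio]; omega)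
    have hm : 1 ≤ q - (s + 1) := by omega
    rw [iterate_tripleStep_succ_of_lt (by omega) hb hm (by congr 1; omega)]
    have : d ≤ (q - (s + 1)) * d := Nat.le_mul_of_pos_left d hm
    omega

end tripleStep

theorem order_pancake_one_triple_r_zero_general (n j k d q r : ℕ) (hj : 1 < j) (hjk : j < k)
    (hkn : k ≤ n) (hd : d = k - j) (hq : q = k / d) (hr : r = k % d)
    (hr0 : r = 0) (hd4 : 4 ≤ d) :
    orderOf (pancake n 1 * pancake n (j - 1) * pancake n (k - 1)) = 4 * q := by
  have hk : k = q * d := by rw [hq, Nat.div_mul_cancel (Nat.dvd_of_mod_eq_zero (hr ▸ hr0))]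
  have hq2 : 2 ≤ q := by
    by_contra! h
    interval_cases q <;> omega
  have hsemi := semiconj_val_pancake_triple (n := n) hj hjk hkn
  rw [show tripleStep (k - j) k = tripleStep d (q * d) by rw [← hd, ← hk]] at hsemi
  have hpow := Equiv.Perm.pow_eq_one_iff_of_semiconj Fin.val_injective hsemi
  refine (orderOf_eq_iff (by omega)).2
    ⟨(hpow _).2 fun a => isPeriodicPt_tripleStep hd4 hq2 a, fun t ht ht0 h => ?_⟩
  exact iterate_tripleStep_zero_ne_zero hd4 hq2 ht0 ht ((hpow t).1 h ⟨0, by omega⟩)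

/-- Let `1 < j < k ≤ n` with `k ≥ 5`, and set `d = k - j`, `q = ⌊k/d⌋`, `r = k mod d`.
If `r = 0` and `d ≥ 4`, then the order of `f_1 f_{j-1} f_{k-1}` in `S_n` is `4q`. -/
theorem order_pancake_one_triple_r_zero (n j k d q r : ℕ) (hj : 1 < j) (hjk : j < k)
    (hkn : k ≤ n) (hk5 : 5 ≤ k) (hd : d = k - j) (hq : q = k / d) (hr : r = k % d)
    (hr0 : r = 0) (hd4 : 4 ≤ d) :
    orderOf (pancake n 1 * pancake n (j - 1) * pancake n (k - 1)) = 4 * q :=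
  order_pancake_one_triple_r_zero_general n j k d q r hj hjk hkn hd hq hr hr0 hd4
end

section
/- Let 1 < j < k ≤ n with k ≥ 5, and set d = k−j, q = ⌊k/d⌋, r = k mod d. Suppose r = 3. Then the order of f_1 f_{j−1} f_{k−1} in S_n equals: q(q+1) if d = 4 and q ≡ 0 (mod 3), or if d ≥ 5 and q ≡ 3 (mod 6); 2q(q+1) if d ≥ 5 and q ≡ 0 (mod 6); 3q(q+1) if d = 4 and q is not divisible by 3, or if d ≥ 5 and q ≡ 1 or 5 (mod 6); and 6q(q+1) if d ≥ 5 and q ≡ 2 or 4 (mod 6). -/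
/-!
Read on positions `0, 1, …` with `k = j + d = q d + 3`, the permutation `f_1 f_{j-1} f_{k-1}`
sends `x < d` to `k - 1 - x`, `d` to `1`, `d + 1` to `0`, every other `x < k` to `x - d`, and
fixes `x ≥ k`. So a point `x < d` jumps to `(d + 2 - x) + (q - 1) d` and walks down in steps of
`d`, staying `≥ 3` until it reaches `d + 2 - x` after `q` steps. Consequently the `(q + 1)`-st
power cycles `0 ↦ 2 ↦ 1 ↦ 0`, so `0` has minimal period `3 (q + 1)`, while the `q`-th power swaps
`l` and `d + 2 - l` for `3 ≤ l < d`, so `3` has minimal period `q` if `d = 4` and `2 q` if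
`d ≥ 5`. Every position lies on the orbit of a point `< d`, hence the order is
`lcm (3 (q + 1)) q`, resp. `lcm (3 (q + 1)) (2 q)`, and evaluating these modulo `6` gives the
four cases.
-/

open Function

theorem Function.minimalPeriod_eq_of_forall_lt {α : Type*} {f : α → α} {x : α} {m : ℕ}
    (hm : 0 < m) (hper : IsPeriodicPt f m x) (hmin : ∀ t, 0 < t → t < m → f^[t] x ≠ x) :
    minimalPeriod f x = m :=
  le_antisymm (hper.minimalPeriod_le hm) <| not_lt.1 fun hlt =>
    hmin _ (hper.minimalPeriod_pos hm) hlt (iterate_minimalPeriod)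

theorem Function.Semiconj.isPeriodicPt_iff {α β : Type*} {f : α → α} {g : β → β} {h : α → β}
    (hinj : Injective h) (hs : Semiconj h f g) {n : ℕ} {x : α} :
    IsPeriodicPt g n (h x) ↔ IsPeriodicPt f n x := by
  simp only [IsPeriodicPt, IsFixedPt, ← (hs.iterate_right n).eq x, hinj.eq_iff]

theorem Function.Semiconj.minimalPeriod_eq {α β : Type*} {f : α → α} {g : β → β} {h : α → β}
    (hinj : Injective h) (hs : Semiconj h f g) (x : α) :
    minimalPeriod g (h x) = minimalPeriod f x :=
  minimalPeriod_eq_minimalPeriod_iff.2 fun _ => hs.isPeriodicPt_iff hinj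

theorem Equiv.Perm.orderOf_eq_lcm_minimalPeriod {α : Type*} {σ : Equiv.Perm α} {x y : α}
    (h : ∀ z, IsPeriodicPt σ (minimalPeriod σ x) z ∨ IsPeriodicPt σ (minimalPeriod σ y) z) :
    orderOf σ = (minimalPeriod σ x).lcm (minimalPeriod σ y) := by
  have hper : ∀ z, IsPeriodicPt σ (orderOf σ) z := fun z => by
    simp [IsPeriodicPt, IsFixedPt, ← Equiv.Perm.coe_pow, pow_orderOf_eq_one]
  refine Nat.dvd_antisymm (orderOf_dvd_of_pow_eq_one <| Equiv.ext fun z => ?_)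
    (Nat.lcm_dvd (hper x).minimalPeriod_dvd (hper y).minimalPeriod_dvd)
  rcases h z with hz | hz
  · exact (hz.trans_dvd (Nat.dvd_lcm_left _ _)).eq
  · exact (hz.trans_dvd (Nat.dvd_lcm_right _ _)).eq

theorem Nat.lcm_eq_mul_of_coprime {a b u v : ℕ} (huv : u.Coprime v) (hu : u ∣ a) (hv : v ∣ b)
    (ha : a ∣ u * v) (hb : b ∣ u * v) : a.lcm b = u * v :=
  Nat.dvd_antisymm (Nat.lcm_dvd ha hb) <|
    huv.mul_dvd_of_dvd_of_dvd (hu.trans (Nat.dvd_lcm_left a b)) (hv.trans (Nat.dvd_lcm_right a b))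

def prefixRev (m x : ℕ) : ℕ := if x ≤ m then m - x else x

theorem val_pancake_apply_s12 {n m : ℕ} (hm : m < n) (a : Fin n) :
    (pancake n m a : ℕ) = prefixRev m a := by
  by_cases ha : (a : ℕ) ≤ m <;> simp [pancake, prefixRev, ha, hm]

def pancakeTriple (j k : ℕ) : ℕ → ℕ := prefixRev 1 ∘ prefixRev (j - 1) ∘ prefixRev (k - 1)

theorem semiconj_val_pancake_mul {n j k : ℕ} (hn : 1 < n) (hj : j ≤ n) (hk : k ≤ n) :
    Semiconj Fin.val (pancake n 1 * pancake n (j - 1) * pancake n (k - 1)) (pancakeTriple j k) :=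
  fun a => by
    simp only [Equiv.Perm.mul_apply, pancakeTriple, comp_apply]
    rw [val_pancake_apply_s12 hn, val_pancake_apply_s12 (by omega), val_pancake_apply_s12 (by omega)]

section Action

variable {j d x : ℕ}

theorem pancakeTriple_apply_of_lt (hj : 1 < j) (hx : x < d) :
    pancakeTriple j (j + d) x = j + d - 1 - x := by
  simp only [pancakeTriple, prefixRev, comp_apply]
  split_ifs <;> omega

theorem pancakeTriple_apply_self (hj : 1 < j) : pancakeTriple j (j + d) d = 1 := by
  simp only [pancakeTriple, prefixRev, comp_apply]
  split_ifs <;> omega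

theorem pancakeTriple_apply_succ_self (hj : 1 < j) : pancakeTriple j (j + d) (d + 1) = 0 := by
  simp only [pancakeTriple, prefixRev, comp_apply]
  split_ifs <;> omega

theorem pancakeTriple_apply_of_le_of_lt (hx : d + 2 ≤ x) (hxk : x < j + d) :
    pancakeTriple j (j + d) x = x - d := by
  simp only [pancakeTriple, prefixRev, comp_apply]
  split_ifs <;> omega

theorem pancakeTriple_apply_of_le (hj : 1 < j) (hx : j + d ≤ x) :
    pancakeTriple j (j + d) x = x := by
  simp only [pancakeTriple, prefixRev, comp_apply]
  split_ifs <;> omega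

theorem iterate_pancakeTriple_add_mul {y : ℕ} (hy : 2 ≤ y) :
    ∀ i, y + i * d < j + d → (pancakeTriple j (j + d))^[i] (y + i * d) = y
  | 0, _ => by simp
  | i + 1, h => by
    rw [iterate_succ_apply, pancakeTriple_apply_of_le_of_lt (by nlinarith) h,
      show y + (i + 1) * d - d = y + i * d by rw [add_mul, one_mul]; omega,
      iterate_pancakeTriple_add_mul hy i (by nlinarith)]

end Action

section RemainderThree

variable {j d q : ℕ}

local notation "τ" => pancakeTriple j (j + d)

theorem pos_of_add_eq_mul_add_three (hd : 4 ≤ d) (hjq : j + d = q * d + 3) : 0 < q :=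
  Nat.pos_of_ne_zero (by rintro rfl; omega)

theorem iterate_pancakeTriple_apply_of_lt (hjq : j + d = q * d + 3) {x t : ℕ}
    (hx : x < d) (ht : 0 < t) (htq : t ≤ q) : τ^[t] x = d + 2 - x + (q - t) * d := by
  obtain ⟨s, rfl⟩ : ∃ s, q = t + s := ⟨q - t, by omega⟩
  obtain ⟨i, rfl⟩ : ∃ i, t = i + 1 := ⟨t - 1, by omega⟩
  have hjd : j + d = i * d + s * d + d + 3 := by rw [hjq]; ring
  rw [iterate_succ_apply, pancakeTriple_apply_of_lt (by omega) hx,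
    show j + d - 1 - x = d + 2 - x + s * d + i * d by omega,
    iterate_pancakeTriple_add_mul (by omega) i (by omega), Nat.add_sub_cancel_left]

theorem iterate_q_pancakeTriple_apply_of_lt (hd : 4 ≤ d) (hjq : j + d = q * d + 3) {x : ℕ}
    (hx : x < d) : τ^[q] x = d + 2 - x := by
  simpa using iterate_pancakeTriple_apply_of_lt hjq hx
    (pos_of_add_eq_mul_add_three hd hjq) le_rfl

theorem iterate_succ_q_pancakeTriple_cycle (hd : 4 ≤ d) (hjq : j + d = q * d + 3) :
    τ^[q + 1] 0 = 2 ∧ τ^[q + 1] 2 = 1 ∧ τ^[q + 1] 1 = 0 := by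
  have hj : 3 ≤ j := by
    have := Nat.le_mul_of_pos_left d (pos_of_add_eq_mul_add_three hd hjq); omega
  simp only [iterate_succ_apply', iterate_q_pancakeTriple_apply_of_lt hd hjq (by omega : 0 < d),
    iterate_q_pancakeTriple_apply_of_lt hd hjq (by omega : 1 < d),
    iterate_q_pancakeTriple_apply_of_lt hd hjq (by omega : 2 < d), Nat.sub_zero,
    show d + 2 - 2 = d by omega, show d + 2 - 1 = d + 1 by omega]
  refine ⟨?_, pancakeTriple_apply_self (by omega), pancakeTriple_apply_succ_self (by omega)⟩
  rw [pancakeTriple_apply_of_le_of_lt le_rfl (by omega)]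
  omega

theorem minimalPeriod_pancakeTriple_zero (hd : 4 ≤ d) (hjq : j + d = q * d + 3) :
    minimalPeriod τ 0 = 3 * (q + 1) := by
  obtain ⟨h02, h21, h10⟩ := iterate_succ_q_pancakeTriple_cycle hd hjq
  refine minimalPeriod_eq_of_forall_lt (by omega) ?_ fun t ht0 ht => ?_
  · change τ^[3 * (q + 1)] 0 = 0
    rw [mul_comm, iterate_mul]
    change τ^[q + 1] (τ^[q + 1] (τ^[q + 1] 0)) = 0
    rw [h02, h21, h10]
  have hblock : ∀ x < 3, ∀ s, 0 < s → s ≤ q → τ^[s] x ≠ 0 := fun x hx s hs hsq => by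
    rw [iterate_pancakeTriple_apply_of_lt hjq (by omega) hs hsq]; omega
  obtain ⟨a, s, rfl, hsq⟩ : ∃ a s, t = s + (q + 1) * a ∧ s ≤ q :=
    ⟨t / (q + 1), t % (q + 1), (Nat.mod_add_div t (q + 1)).symm,
      Nat.lt_succ_iff.1 (Nat.mod_lt t q.succ_pos)⟩
  have ha : a < 3 := by nlinarith
  interval_cases a
  · simp only [mul_zero, add_zero] at ht0 ⊢
    exact hblock 0 (by norm_num) s ht0 hsq
  · rw [mul_one, iterate_add_apply, h02]
    rcases Nat.eq_zero_or_pos s with rfl | hs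
    · simp
    exact hblock 2 (by norm_num) s hs hsq
  · rw [mul_two, iterate_add_apply, iterate_add_apply, h02, h21]
    rcases Nat.eq_zero_or_pos s with rfl | hs
    · simp
    exact hblock 1 (by norm_num) s hs hsq

theorem minimalPeriod_pancakeTriple_three_of_eq_four (hjq : j + 4 = q * 4 + 3) :
    minimalPeriod (pancakeTriple j (j + 4)) 3 = q := by
  have hq := pos_of_add_eq_mul_add_three le_rfl hjq
  refine minimalPeriod_eq_of_forall_lt hq
    (iterate_q_pancakeTriple_apply_of_lt le_rfl hjq (by norm_num)) fun t ht0 htq => ?_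
  rw [iterate_pancakeTriple_apply_of_lt hjq (by norm_num) ht0 htq.le]
  omega

theorem minimalPeriod_pancakeTriple_three_of_five_le (hd : 5 ≤ d) (hjq : j + d = q * d + 3) :
    minimalPeriod τ 3 = 2 * q := by
  have hq := pos_of_add_eq_mul_add_three (by omega) hjq
  have h3 : τ^[q] 3 = d - 1 := by
    rw [iterate_q_pancakeTriple_apply_of_lt (by omega) hjq (by omega)]; omega
  have hd1 : τ^[q] (d - 1) = 3 := by
    rw [iterate_q_pancakeTriple_apply_of_lt (by omega) hjq (by omega)]; omega
  refine minimalPeriod_eq_of_forall_lt (by omega) ?_ fun t ht0 ht => ?_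
  · change τ^[2 * q] 3 = 3
    rw [two_mul, iterate_add_apply, h3, hd1]
  rcases le_or_gt t q with htq | hqt
  · rw [iterate_pancakeTriple_apply_of_lt hjq (by omega) ht0 htq]
    omega
  · obtain ⟨s, rfl⟩ : ∃ s, t = s + q := ⟨t - q, by omega⟩
    rw [iterate_add_apply, h3,
      iterate_pancakeTriple_apply_of_lt hjq (by omega) (by omega) (by omega)]
    have := Nat.le_mul_of_pos_left d (show 0 < q - s by omega)
    omega

theorem exists_iterate_pancakeTriple_eq (hd : 4 ≤ d) (hjq : j + d = q * d + 3) {z : ℕ}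
    (hz3 : 3 ≤ z) (hz : z < j + d) : ∃ x < d, ∃ t, τ^[t] x = z := by
  obtain ⟨s, r, hzsr, hr, hs⟩ : ∃ s r, z - 3 = s * d + r ∧ r < d ∧ s < q :=
    ⟨(z - 3) / d, (z - 3) % d, (Nat.div_add_mod' (z - 3) d).symm, Nat.mod_lt _ (by omega),
      (Nat.div_lt_iff_lt_mul (by omega)).2 (by omega)⟩
  refine ⟨d - 1 - r, by omega, q - s, ?_⟩
  rw [iterate_pancakeTriple_apply_of_lt hjq (by omega) (by omega) (by omega),
    Nat.sub_sub_self hs.le]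
  omega

theorem isPeriodicPt_pancakeTriple_or (hd : 4 ≤ d) (hjq : j + d = q * d + 3) {c : ℕ}
    (hc : ∀ l, 3 ≤ l → l < d → IsPeriodicPt τ c l) (z : ℕ) :
    IsPeriodicPt τ (3 * (q + 1)) z ∨ IsPeriodicPt τ c z := by
  obtain ⟨h02, h21, -⟩ := iterate_succ_q_pancakeTriple_cycle hd hjq
  have h0 : IsPeriodicPt τ (3 * (q + 1)) 0 :=
    minimalPeriod_pancakeTriple_zero hd hjq ▸ isPeriodicPt_minimalPeriod τ 0
  have hlow : ∀ x < d, IsPeriodicPt τ (3 * (q + 1)) x ∨ IsPeriodicPt τ c x := fun x hx => by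
    rcases (by omega : x = 0 ∨ x = 1 ∨ x = 2 ∨ 3 ≤ x) with rfl | rfl | rfl | h3
    · exact .inl h0
    · have := (h0.apply_iterate (q + 1)).apply_iterate (q + 1)
      rw [h02, h21] at this
      exact .inl this
    · exact .inl (h02 ▸ h0.apply_iterate (q + 1))
    · exact .inr (hc x h3 hx)
  rcases lt_or_ge z 3 with hz3 | hz3
  · exact hlow z (by omega)
  rcases lt_or_ge z (j + d) with hz | hz
  · obtain ⟨x, hx, t, rfl⟩ := exists_iterate_pancakeTriple_eq hd hjq hz3 hz
    exact (hlow x hx).imp (·.apply_iterate t) (·.apply_iterate t)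
  · have hj : 1 < j := by
      have := Nat.le_mul_of_pos_left d (pos_of_add_eq_mul_add_three hd hjq); omega
    exact .inl ((show IsFixedPt τ z from pancakeTriple_apply_of_le hj hz).isPeriodicPt _)

theorem isPeriodicPt_minimalPeriod_pancakeTriple_three (hd : 4 ≤ d) (hjq : j + d = q * d + 3)
    {l : ℕ} (hl3 : 3 ≤ l) (hld : l < d) : IsPeriodicPt τ (minimalPeriod τ 3) l := by
  rcases hd.eq_or_lt with rfl | hd5
  · obtain rfl : l = 3 := by omega
    exact isPeriodicPt_minimalPeriod _ _
  · rw [minimalPeriod_pancakeTriple_three_of_five_le hd5 hjq]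
    change τ^[2 * q] l = l
    rw [two_mul, iterate_add_apply, iterate_q_pancakeTriple_apply_of_lt hd hjq hld,
      iterate_q_pancakeTriple_apply_of_lt hd hjq (by omega)]
    omega

theorem orderOf_pancake_mul_eq_lcm {n : ℕ} (hd : 4 ≤ d) (hjq : j + d = q * d + 3)
    (hn : j + d ≤ n) :
    orderOf (pancake n 1 * pancake n (j - 1) * pancake n (j + d - 1)) =
      (3 * (q + 1)).lcm (minimalPeriod τ 3) := by
  have hqd := Nat.le_mul_of_pos_left d (pos_of_add_eq_mul_add_three hd hjq)
  have hs := semiconj_val_pancake_mul (j := j) (by omega) (by omega) hn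
  have hmp (x : Fin n) := hs.minimalPeriod_eq Fin.val_injective x
  have hperiodic {m : ℕ} (x : Fin n) := hs.isPeriodicPt_iff Fin.val_injective (n := m) (x := x)
  rw [Equiv.Perm.orderOf_eq_lcm_minimalPeriod (x := ⟨0, by omega⟩) (y := ⟨3, by omega⟩)
    fun z => ?_, ← hmp, ← hmp]
  · simp only [minimalPeriod_pancakeTriple_zero hd hjq]
  rw [← hmp, ← hmp, ← hperiodic, ← hperiodic]
  simpa [minimalPeriod_pancakeTriple_zero hd hjq] using isPeriodicPt_pancakeTriple_or hd hjq
    (fun l => isPeriodicPt_minimalPeriod_pancakeTriple_three hd hjq) z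

end RemainderThree

theorem lcm_three_mul_succ_self (q : ℕ) :
    (3 * (q + 1)).lcm q = (if 3 ∣ q then 1 else 3) * q * (q + 1) := by
  have hq : (q + 1).Coprime q := Nat.coprime_self_add_left.2 (Nat.coprime_one_left q)
  split_ifs with h3
  · rw [Nat.lcm_eq_mul_of_coprime hq (dvd_mul_left _ _) dvd_rfl
      (by rw [mul_comm (q + 1)]; exact mul_dvd_mul_right h3 _) (dvd_mul_left _ _)]
    ring
  · rw [Nat.lcm_eq_mul_of_coprime (u := 3 * (q + 1))
      (Nat.Coprime.mul_left ((Nat.prime_three.coprime_iff_not_dvd).2 h3) hq) dvd_rfl dvd_rfl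
      (dvd_mul_right _ _) (dvd_mul_left _ _)]
    ring

theorem lcm_three_mul_succ_two_mul (q : ℕ) :
    (3 * (q + 1)).lcm (2 * q) =
      (if 3 ∣ q then 1 else 3) * (if 2 ∣ q then 2 else 1) * q * (q + 1) := by
  have hq : (q + 1).Coprime q := Nat.coprime_self_add_left.2 (Nat.coprime_one_left q)
  have hq2 (h2 : 2 ∣ q) : (q + 1).Coprime (2 * q) :=
    Nat.Coprime.mul_right (Nat.coprime_comm.1 ((Nat.prime_two.coprime_iff_not_dvd).2 (by omega))) hq
  have h3q (h3 : ¬ 3 ∣ q) : Nat.Coprime 3 q := (Nat.prime_three.coprime_iff_not_dvd).2 h3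
  split_ifs with h3 h2 h2
  · rw [Nat.lcm_eq_mul_of_coprime (hq2 h2) (dvd_mul_left _ _) dvd_rfl
      (by rw [mul_comm (q + 1)]; exact mul_dvd_mul_right (h3.mul_left 2) _) (dvd_mul_left _ _)]
    ring
  · rw [Nat.lcm_eq_mul_of_coprime hq (dvd_mul_left _ _) (dvd_mul_left _ _)
      (by rw [mul_comm (q + 1)]; exact mul_dvd_mul_right h3 _)
      (by obtain ⟨m, hm⟩ : 2 ∣ q + 1 := by omega
          exact ⟨m, by rw [hm]; ring⟩)]
    ring
  · rw [Nat.lcm_eq_mul_of_coprime (u := 3 * (q + 1))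
      (Nat.Coprime.mul_left (Nat.Coprime.mul_right (by decide) (h3q h3)) (hq2 h2)) dvd_rfl dvd_rfl
      (dvd_mul_right _ _) (dvd_mul_left _ _)]
    ring
  · rw [Nat.lcm_eq_mul_of_coprime (u := 3 * (q + 1)) (v := q)
      (Nat.Coprime.mul_left (h3q h3) hq) dvd_rfl (dvd_mul_left _ _) (dvd_mul_right _ _)
      (by obtain ⟨m, hm⟩ : 2 ∣ q + 1 := by omega
          exact ⟨3 * m, by rw [hm]; ring⟩)]
    ring

theorem order_pancake_one_triple_r_three_general (n j k d q r : ℕ) (hjk : j < k)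
    (hkn : k ≤ n) (hd : d = k - j) (hq : q = k / d) (hr : r = k % d)
    (hr3 : r = 3) :
    ((d = 4 ∧ q % 3 = 0) ∨ (5 ≤ d ∧ q % 6 = 3) →
      orderOf (pancake n 1 * pancake n (j - 1) * pancake n (k - 1)) = q * (q + 1)) ∧
    (5 ≤ d ∧ q % 6 = 0 →
      orderOf (pancake n 1 * pancake n (j - 1) * pancake n (k - 1)) =
        2 * q * (q + 1)) ∧
    ((d = 4 ∧ q % 3 ≠ 0) ∨ (5 ≤ d ∧ (q % 6 = 1 ∨ q % 6 = 5)) →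
      orderOf (pancake n 1 * pancake n (j - 1) * pancake n (k - 1)) =
        3 * q * (q + 1)) ∧
    (5 ≤ d ∧ (q % 6 = 2 ∨ q % 6 = 4) →
      orderOf (pancake n 1 * pancake n (j - 1) * pancake n (k - 1)) =
        6 * q * (q + 1)) := by
  obtain rfl : k = j + d := by omega
  have hd4 : 4 ≤ d := by
    have := Nat.mod_lt (j + d) (show 0 < d by omega)
    omega
  have hjq : j + d = q * d + 3 := by
    have := Nat.div_add_mod' (j + d) d
    rw [hq]
    omega
  have hord : orderOf (pancake n 1 * pancake n (j - 1) * pancake n (j + d - 1)) =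
      (if 3 ∣ q then 1 else 3) * (if d ≠ 4 ∧ 2 ∣ q then 2 else 1) * q * (q + 1) := by
    rw [orderOf_pancake_mul_eq_lcm hd4 hjq hkn]
    rcases hd4.eq_or_lt with rfl | hd5
    · simp [minimalPeriod_pancakeTriple_three_of_eq_four hjq, lcm_three_mul_succ_self]
    · simp [minimalPeriod_pancakeTriple_three_of_five_le hd5 hjq, lcm_three_mul_succ_two_mul,
        hd5.ne']
  rw [hord]
  refine ⟨?_, ?_, ?_, ?_⟩ <;> intro h <;> split_ifs <;> first | omega | ring

/-- Let `1 < j < k ≤ n` with `k ≥ 5`, and set `d = k - j`, `q = ⌊k/d⌋`, `r = k mod d`.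
Suppose `r = 3`.  Then the order of `f_1 f_{j-1} f_{k-1}` in `S_n` is: `q(q+1)` if
`d = 4` and `q ≡ 0 (mod 3)`, or if `d ≥ 5` and `q ≡ 3 (mod 6)`; `2q(q+1)` if `d ≥ 5`
and `q ≡ 0 (mod 6)`; `3q(q+1)` if `d = 4` and `q` is not divisible by `3`, or if
`d ≥ 5` and `q ≡ 1` or `5 (mod 6)`; and `6q(q+1)` if `d ≥ 5` and `q ≡ 2` or
`4 (mod 6)`. -/
theorem order_pancake_one_triple_r_three (n j k d q r : ℕ) (hj : 1 < j) (hjk : j < k)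
    (hkn : k ≤ n) (hk5 : 5 ≤ k) (hd : d = k - j) (hq : q = k / d) (hr : r = k % d)
    (hr3 : r = 3) :
    ((d = 4 ∧ q % 3 = 0) ∨ (5 ≤ d ∧ q % 6 = 3) →
      orderOf (pancake n 1 * pancake n (j - 1) * pancake n (k - 1)) = q * (q + 1)) ∧
    (5 ≤ d ∧ q % 6 = 0 →
      orderOf (pancake n 1 * pancake n (j - 1) * pancake n (k - 1)) =
        2 * q * (q + 1)) ∧
    ((d = 4 ∧ q % 3 ≠ 0) ∨ (5 ≤ d ∧ (q % 6 = 1 ∨ q % 6 = 5)) →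
      orderOf (pancake n 1 * pancake n (j - 1) * pancake n (k - 1)) =
        3 * q * (q + 1)) ∧
    (5 ≤ d ∧ (q % 6 = 2 ∨ q % 6 = 4) →
      orderOf (pancake n 1 * pancake n (j - 1) * pancake n (k - 1)) =
        6 * q * (q + 1)) :=
  order_pancake_one_triple_r_three_general n j k d q r hjk hkn hd hq hr hr3
end

section
/- Let 1 ≤ i < j ≤ n with j ≥ 4 and 1 ≤ ⌊j/2⌋ < i < j−1. Set d = j−i, q = ⌊j/d⌋, and r = j mod d. Then the order of f^B_{i−1} f^B_{j−1} in B_n equals 2q if r = 0, and equals 2q(q+1) if r ≠ 0. -/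
/-- The burnt pancake generator `f^B_m` of the hyperoctahedral group `B_n` of signed
permutations, modeled as a permutation of `Fin n × Bool` (a `0`-indexed position together
with a sign, `false` meaning positive): it reverses and negates the first `m+1` entries,
sending `(a, s)` to `(m - a, !s)` whenever `a ≤ m` (and `m < n`), and fixing all other
points.  (In `1`-indexed terms, `f^B_m a = -(m + 2 - a)` for `1 ≤ a ≤ m + 1` and
`f^B_m a = a` for `m + 1 < a ≤ n`; for `m = 0` it is the sign change of the first entry.) -/
def bpancake (n m : ℕ) : Equiv.Perm (Fin n × Bool) :=
  Function.Involutive.toPerm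
    (fun x => if h : (x.1 : ℕ) ≤ m ∧ m < n then
        (⟨m - (x.1 : ℕ), Nat.lt_of_le_of_lt (Nat.sub_le m x.1) h.2⟩, !x.2) else x)
    (by
      intro x
      dsimp only
      by_cases h : (x.1 : ℕ) ≤ m ∧ m < n
      · rw [dif_pos h, dif_pos ⟨Nat.sub_le m (x.1 : ℕ), h.2⟩]
        exact Prod.ext (Fin.ext (Nat.sub_sub_self h.1)) (Bool.not_not x.2)
      · rw [dif_neg h, dif_neg h])

/-!
Write `m = i - 1`, `k = j - 1`, `d = k - m` and `σ = f^B_m f^B_k`, acting on the `0`-indexed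
positions `Fin n` with a sign. Then `σ` fixes the positions beyond `k`, shifts a position
`d ≤ a ≤ k` down to `a - d`, and sends `a < d` to `k - a` with its sign flipped. So every
orbit meets the block `a < d`, and a point `(a, s)` of the block first returns to the block
after `t + 1` steps, at `(b, !s)`, where `b + t d + a = k` and `b < d`; its period is `2(t + 1)`.
Writing `k + 1 = q d + r`, this gives period `2(q + 1)` for `a < r` and `2q` for `r ≤ a < d`,
and the order of `σ` is the least common multiple of these.
-/

namespace MulAction

variable {M α : Type*} [Monoid M] [MulAction M α]

theorem period_eq_two_mul_of_pow_smul_ne {g : M} {a : α} {p : ℕ} (hp : 0 < p)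
    (h2p : g ^ (2 * p) • a = a) (hne : ∀ k, 0 < k → k ≤ p → g ^ k • a ≠ a) :
    period g a = 2 * p := by
  have hpos := period_pos_of_fixed (by omega) h2p
  have hgt : p + 1 ≤ period g a := le_period hpos fun k hk hkp => hne k hk (by omega)
  obtain ⟨c, hc⟩ := pow_smul_eq_iff_period_dvd.mp h2p
  rcases c with _ | _ | c
  · omega
  · simpa using hc.symm
  · nlinarith

end MulAction

open MulAction

section BurntPancake

variable {n m k d : ℕ}

lemma bpancake_apply_of_le {a b : Fin n} (hmn : m < n) (hab : (b : ℕ) + a = m) (s : Bool) :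
    bpancake n m (a, s) = (b, !s) := by
  refine (dif_pos (⟨by omega, hmn⟩ : (a : ℕ) ≤ m ∧ m < n)).trans ?_
  exact Prod.ext (Fin.ext (by simp only; omega)) rfl

lemma bpancake_apply_of_lt {a : Fin n} (ha : m < a) (s : Bool) :
    bpancake n m (a, s) = (a, s) :=
  dif_neg (by simp only; omega)

lemma bpancake_mul_apply_of_lt (hmk : m + d = k) (hkn : k < n) {a b : Fin n}
    (ha : (a : ℕ) < d) (hab : (b : ℕ) + a = k) (s : Bool) :
    (bpancake n m * bpancake n k) (a, s) = (b, !s) := by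
  rw [Equiv.Perm.mul_apply, bpancake_apply_of_le hkn hab, bpancake_apply_of_lt (by omega)]

lemma bpancake_mul_apply_of_le (hmk : m + d = k) (hkn : k < n) {a b : Fin n}
    (hab : (b : ℕ) + d = a) (ha : (a : ℕ) ≤ k) (s : Bool) :
    (bpancake n m * bpancake n k) (a, s) = (b, s) := by
  have hc : k - a < n := by omega
  rw [Equiv.Perm.mul_apply, bpancake_apply_of_le (b := ⟨k - a, hc⟩) hkn (by simp only; omega),
    bpancake_apply_of_le (a := ⟨k - a, hc⟩) (b := b) (by omega) (by simp only; omega),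
    Bool.not_not]

lemma bpancake_mul_apply_of_gt (hmk : m ≤ k) {a : Fin n} (ha : k < (a : ℕ)) (s : Bool) :
    (bpancake n m * bpancake n k) (a, s) = (a, s) := by
  rw [Equiv.Perm.mul_apply, bpancake_apply_of_lt ha, bpancake_apply_of_lt (by omega)]

lemma bpancake_mul_pow_apply_of_le (hmk : m + d = k) (hkn : k < n) (t : ℕ) {a b : Fin n}
    (ha : (a : ℕ) ≤ k) (hab : (b : ℕ) + t * d = a) (s : Bool) :
    ((bpancake n m * bpancake n k) ^ t) (a, s) = (b, s) := by
  induction t generalizing b with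
  | zero =>
    rw [pow_zero, Equiv.Perm.one_apply]
    exact Prod.ext (Fin.ext (by simp only; omega)) rfl
  | succ t ih =>
    have hc : (b : ℕ) + d < n := by nlinarith
    rw [pow_succ', Equiv.Perm.mul_apply, ih (b := ⟨b + d, hc⟩) (by simp only; linarith),
      bpancake_mul_apply_of_le hmk hkn rfl (by simp only; nlinarith)]

lemma bpancake_mul_pow_succ_apply_of_lt (hmk : m + d = k) (hkn : k < n) (t : ℕ) {a b : Fin n}
    (ha : (a : ℕ) < d) (hab : (b : ℕ) + t * d + a = k) (s : Bool) :
    ((bpancake n m * bpancake n k) ^ (t + 1)) (a, s) = (b, !s) := by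
  have hc : k - a < n := by omega
  rw [pow_succ, Equiv.Perm.mul_apply,
    bpancake_mul_apply_of_lt (b := ⟨k - a, hc⟩) hmk hkn ha (by simp only; omega),
    bpancake_mul_pow_apply_of_le hmk hkn t (a := ⟨k - a, hc⟩) (b := b) (by simp only; omega)
      (by simp only; omega)]

lemma period_bpancake_mul (hmk : m + d = k) (hkn : k < n) (t : ℕ) {a b : Fin n}
    (ha : (a : ℕ) < d) (hb : (b : ℕ) < d) (hab : (b : ℕ) + t * d + a = k) (s : Bool) :
    period (bpancake n m * bpancake n k) (a, s) = 2 * (t + 1) := by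
  refine period_eq_two_mul_of_pow_smul_ne t.succ_pos ?_ fun u hu hut => ?_
  · rw [Equiv.Perm.smul_def, two_mul, pow_add, Equiv.Perm.mul_apply,
      bpancake_mul_pow_succ_apply_of_lt hmk hkn t ha hab,
      bpancake_mul_pow_succ_apply_of_lt hmk hkn t hb (b := a) (by omega), Bool.not_not]
  · obtain ⟨u, rfl⟩ : ∃ u', u = u' + 1 := ⟨u - 1, by omega⟩
    have hud : u * d ≤ t * d := Nat.mul_le_mul_right d (by omega)
    have he : k - u * d - a < n := by omega
    rw [Equiv.Perm.smul_def, bpancake_mul_pow_succ_apply_of_lt (b := ⟨k - u * d - a, he⟩)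
      hmk hkn u ha (by simp only; omega)]
    simp

lemma bpancake_mul_pow_eq_one (hmk : m + d = k) (hkn : k < n) (hd : 0 < d) {N : ℕ}
    (hN : ∀ a : Fin n, (a : ℕ) < d → ∀ s : Bool,
      period (bpancake n m * bpancake n k) (a, s) ∣ N) :
    (bpancake n m * bpancake n k) ^ N = 1 := by
  set σ := bpancake n m * bpancake n k
  ext1 ⟨a, s⟩
  rw [Equiv.Perm.one_apply]
  rcases lt_or_ge k a with hka | hak
  · exact Function.IsFixedPt.perm_pow (bpancake_mul_apply_of_gt (by omega) hka s) N
  have hb : a % d < n := by have := Nat.mod_lt a hd; omega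
  have hshift : (σ ^ (a / d)) (a, s) = (⟨a % d, hb⟩, s) :=
    bpancake_mul_pow_apply_of_le hmk hkn _ hak (by simp only; rw [Nat.mod_add_div']) s
  have hfix : (σ ^ N) (⟨a % d, hb⟩, s) = (⟨a % d, hb⟩, s) := by
    rw [← Equiv.Perm.smul_def, pow_smul_eq_iff_period_dvd]
    exact hN _ (Nat.mod_lt a hd) s
  apply (σ ^ (a / d)).injective
  rw [← Equiv.Perm.mul_apply, ← pow_mul_comm, Equiv.Perm.mul_apply, hshift, hfix]

variable {q r : ℕ}

lemma period_bpancake_mul_of_lt_rem (hmk : m + d = k) (hkn : k < n) (hqr : q * d + r = k + 1)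
    (hrd : r < d) {a : Fin n} (ha : (a : ℕ) < r) (s : Bool) :
    period (bpancake n m * bpancake n k) (a, s) = 2 * (q + 1) :=
  period_bpancake_mul hmk hkn q (b := ⟨r - 1 - a, by omega⟩) (by omega) (by simp only; omega)
    (by simp only; omega) s

lemma period_bpancake_mul_of_rem_le (hmk : m + d = k) (hkn : k < n) (hqr : q * d + r = k + 1)
    (hrd : r < d) {a : Fin n} (ha : r ≤ (a : ℕ)) (had : (a : ℕ) < d) (s : Bool) :
    period (bpancake n m * bpancake n k) (a, s) = 2 * q := by
  cases q with
  | zero => omega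
  | succ t =>
    exact period_bpancake_mul hmk hkn t (b := ⟨d + r - 1 - a, by omega⟩) had
      (by simp only; omega) (by simp only; rw [add_mul] at hqr; omega) s

lemma bpancake_mul_pow_eq_one_iff (hmk : m + d = k) (hkn : k < n) (hqr : q * d + r = k + 1)
    (hrd : r < d) {N : ℕ} :
    (bpancake n m * bpancake n k) ^ N = 1 ↔ 2 * q ∣ N ∧ (r ≠ 0 → 2 * (q + 1) ∣ N) := by
  constructor
  · intro h
    have hdvd : ∀ x : Fin n × Bool, period (bpancake n m * bpancake n k) x ∣ N := fun x => by
      rw [← pow_smul_eq_iff_period_dvd, h, one_smul]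
    refine ⟨?_, fun hr => ?_⟩
    · simpa [period_bpancake_mul_of_rem_le hmk hkn hqr hrd (a := ⟨r, by omega⟩) le_rfl hrd]
        using hdvd (⟨r, by omega⟩, false)
    · simpa [period_bpancake_mul_of_lt_rem hmk hkn hqr hrd (a := ⟨0, by omega⟩)
        (by simp only; omega)] using hdvd (⟨0, by omega⟩, false)
  · rintro ⟨hq, hq'⟩
    refine bpancake_mul_pow_eq_one hmk hkn (by omega) fun a had s => ?_
    rcases lt_or_ge (a : ℕ) r with har | hra
    · rw [period_bpancake_mul_of_lt_rem hmk hkn hqr hrd har]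
      exact hq' (by omega)
    · rwa [period_bpancake_mul_of_rem_le hmk hkn hqr hrd hra had]

end BurntPancake

theorem order_bpancake_mul_middle_case_general (n i j d q r : ℕ) (hi1 : 1 ≤ i) (hij : i < j)
    (hjn : j ≤ n) (hd : d = j - i) (hq : q = j / d) (hr : r = j % d) :
    (r = 0 → orderOf (bpancake n (i - 1) * bpancake n (j - 1)) = 2 * q) ∧
    (r ≠ 0 → orderOf (bpancake n (i - 1) * bpancake n (j - 1)) = 2 * q * (q + 1)) := by
  have hmk : i - 1 + d = j - 1 := by omega
  have hkn : j - 1 < n := by omega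
  have hqr : q * d + r = j - 1 + 1 := by rw [hq, hr, Nat.div_add_mod']; omega
  have hrd : r < d := hr ▸ Nat.mod_lt j (by omega)
  have hdvd (N : ℕ) : orderOf (bpancake n (i - 1) * bpancake n (j - 1)) ∣ N ↔
      2 * q ∣ N ∧ (r ≠ 0 → 2 * (q + 1) ∣ N) :=
    orderOf_dvd_iff_pow_eq_one.trans (bpancake_mul_pow_eq_one_iff hmk hkn hqr hrd)
  have hlcm : Nat.lcm (2 * q) (2 * (q + 1)) = 2 * q * (q + 1) := by
    rw [Nat.lcm_mul_left, (Nat.coprime_self_add_right.mpr (Nat.coprime_one_right q)).lcm_eq_mul,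
      mul_assoc]
  refine ⟨fun hr0 => Nat.dvd_right_iff_eq.mp fun N => ?_,
    fun hr0 => Nat.dvd_right_iff_eq.mp fun N => ?_⟩
  · simp [hdvd, hr0]
  · rw [hdvd, ← hlcm, Nat.lcm_dvd_iff]
    simp [hr0]

/-- Let `1 ≤ i < j ≤ n` with `j ≥ 4` and `1 ≤ ⌊j/2⌋ < i < j - 1`, and set `d = j - i`,
`q = ⌊j/d⌋`, `r = j mod d`.  Then the order of `f^B_{i-1} f^B_{j-1}` in the
hyperoctahedral group `B_n` is `2q` if `r = 0`, and `2q(q+1)` if `r ≠ 0`. -/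
theorem order_bpancake_mul_middle_case (n i j d q r : ℕ) (hi1 : 1 ≤ i) (hij : i < j)
    (hjn : j ≤ n) (hj4 : 4 ≤ j) (hhalf1 : 1 ≤ j / 2) (hhalf : j / 2 < i)
    (hij1 : i < j - 1) (hd : d = j - i) (hq : q = j / d) (hr : r = j % d) :
    (r = 0 → orderOf (bpancake n (i - 1) * bpancake n (j - 1)) = 2 * q) ∧
    (r ≠ 0 → orderOf (bpancake n (i - 1) * bpancake n (j - 1)) = 2 * q * (q + 1)) :=
  order_bpancake_mul_middle_case_general n i j d q r hi1 hij hjn hd hq hr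
end
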